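/- arXiv:2108.01119 — 4 statements merged into one kernel-verified Lean document; each statement's English description precedes it below -/
import Mathlib

section
/- In the fan graph F_{m,1} (the join of the empty graph on m ≥ 1 vertices with a single vertex), every vertex of the form {w_i, w_i} in M_2(F_{m,1}) has degree 1; consequently if m ≥ 2 then M_2(F_{m,1}) is not Hamiltonian. -/
/-- The complete double vertex graph `M₂(G)`: vertices are the 2-multisubsets
of `V(G)` (modelled as `Sym2 V`), two of them adjacent when their symmetric
difference (as multisets) is a pair of adjacent vertices of `G`. -/
def M2 {V : Type*} (G : SimpleGraph V) : SimpleGraph (Sym2 V) where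
  Adj s t := ∃ x y z, G.Adj y z ∧ s = s(x, y) ∧ t = s(x, z)
  symm := by
    constructor
    rintro s t ⟨x, y, z, h, rfl, rfl⟩
    exact ⟨x, z, y, h.symm, rfl, rfl⟩
  loopless := by
    constructor
    rintro s ⟨x, y, z, h, rfl, heq⟩
    rw [Sym2.eq_iff] at heq
    rcases heq with ⟨-, rfl⟩ | ⟨rfl, rfl⟩
    · exact h.ne rfl
    · exact h.ne rfl

/-- The join `G + H` of two disjoint graphs. -/
def joinGraph {α β : Type*} (G : SimpleGraph α) (H : SimpleGraph β) :
    SimpleGraph (α ⊕ β) where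
  Adj x y :=
    match x, y with
    | .inl a, .inl b => G.Adj a b
    | .inr a, .inr b => H.Adj a b
    | .inl _, .inr _ => True
    | .inr _, .inl _ => True
  symm := by constructor; rintro (a | a) (b | b) h <;> simp_all [SimpleGraph.adj_comm]
  loopless := by constructor; rintro (a | a) h <;> simp_all

/-- The generalized fan graph `F_{m,n} = E_m + P_n`. -/
def fanGraph (m n : ℕ) : SimpleGraph (Fin m ⊕ Fin n) :=
  joinGraph ⊥ (SimpleGraph.pathGraph n)

/-! A move from `{v, v}` in `M₂(G)` sends one of its two tokens at `v` to a neighbour `z`,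
so the neighbours of `{v, v}` are the `{v, z}` with `z ~ v`. In `F_{m,1}` every `w_i` is a
leaf, hence so is `{w_i, w_i}` in `M₂(F_{m,1})`, and a graph with a leaf and at least two
vertices has no Hamiltonian cycle. -/

namespace SimpleGraph

variable {V : Type*}

/-- On a Hamiltonian cycle through `v`, the vertices before and after `v` are distinct
neighbours of `v`. -/
lemma IsHamiltonian.not_existsUnique_adj [Fintype V] [DecidableEq V] [Nontrivial V]
    {G : SimpleGraph V} (hG : G.IsHamiltonian) (v : V) : ¬ ∃! w, G.Adj v w := by
  rintro ⟨w, -, hw⟩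
  obtain ⟨p, hp⟩ := hG.exists_isHamiltonianCycle v
  have hcycle := hp.isCycle
  apply hcycle.snd_ne_penultimate
  rw [hw _ (p.adj_snd hcycle.not_nil), hw _ (p.adj_penultimate hcycle.not_nil).symm]

lemma M2_adj_diag_iff {G : SimpleGraph V} {v : V} {t : Sym2 V} :
    (M2 G).Adj s(v, v) t ↔ ∃ z, G.Adj v z ∧ t = s(v, z) := by
  constructor
  · rintro ⟨x, y, z, hyz, hs, rfl⟩
    obtain ⟨rfl, rfl⟩ : x = v ∧ y = v := by
      rcases Sym2.eq_iff.mp hs with ⟨h₁, h₂⟩ | ⟨h₁, h₂⟩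
      exacts [⟨h₁.symm, h₂.symm⟩, ⟨h₂.symm, h₁.symm⟩]
    exact ⟨z, hyz, rfl⟩
  · rintro ⟨z, hvz, rfl⟩
    exact ⟨v, v, z, hvz, rfl, rfl⟩

lemma M2_existsUnique_adj_diag {G : SimpleGraph V} {v : V} (h : ∃! z, G.Adj v z) :
    ∃! t, (M2 G).Adj s(v, v) t := by
  obtain ⟨z, hvz, hz⟩ := h
  refine ⟨s(v, z), M2_adj_diag_iff.mpr ⟨z, hvz, rfl⟩, fun t ht => ?_⟩
  obtain ⟨z', hvz', rfl⟩ := M2_adj_diag_iff.mp ht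
  rw [hz z' hvz']

end SimpleGraph

lemma fanGraph_existsUnique_adj_inl (m : ℕ) (i : Fin m) :
    ∃! z, (fanGraph m 1).Adj (Sum.inl i) z := by
  refine ⟨Sum.inr 0, trivial, ?_⟩
  rintro (j | j) hij
  · exact absurd hij (by simp [fanGraph, joinGraph])
  · rw [Subsingleton.elim j 0]

theorem stmt_3_general (m : ℕ) :
    (∀ i : Fin m, ∃! t : Sym2 (Fin m ⊕ Fin 1),
      (M2 (fanGraph m 1)).Adj s(Sum.inl i, Sum.inl i) t) ∧
    (2 ≤ m → ¬ (M2 (fanGraph m 1)).IsHamiltonian) := by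
  have hleaf (i : Fin m) := SimpleGraph.M2_existsUnique_adj_diag (fanGraph_existsUnique_adj_inl m i)
  refine ⟨hleaf, fun hm hham => ?_⟩
  let i : Fin m := ⟨0, by omega⟩
  have : Nontrivial (Sym2 (Fin m ⊕ Fin 1)) :=
    ⟨s(Sum.inl i, Sum.inl i), s(Sum.inl i, Sum.inr 0), by simp⟩
  exact hham.not_existsUnique_adj _ (hleaf i)

theorem stmt_3 (m : ℕ) (hm : 1 ≤ m) :
    (∀ i : Fin m, ∃! t : Sym2 (Fin m ⊕ Fin 1),
      (M2 (fanGraph m 1)).Adj s(Sum.inl i, Sum.inl i) t) ∧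
    (2 ≤ m → ¬ (M2 (fanGraph m 1)).IsHamiltonian) :=
  stmt_3_general m
end

section
/- For positive integers m and n ≥ 2 with m > 2(n−1), the complete double vertex graph M_2(F_{m,n}) is not Hamiltonian. -/
/-!
In `M₂(E_m + P_n)` a pair of two vertices of `E_m` has only mixed neighbours (one vertex of `E_m`,
one of `P_n`), so along a Hamiltonian cycle the predecessors of the `C(m+1, 2)` such pairs are
distinct mixed pairs. The cycle also has to enter the nonempty proper set of pairs inside `P_n`,
which is possible only from a mixed pair, and the successor of that mixed pair is not a pair
inside `E_m`. Hence `C(m+1, 2) < m n`, that is `m ≤ 2 (n - 1)`.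
-/

open SimpleGraph Finset

namespace SimpleGraph

variable {V : Type*} {G : SimpleGraph V}

namespace Walk

variable {v : V} {p : G.Walk v v}

lemma IsCycle.injOn_fst_darts (hp : p.IsCycle) : Set.InjOn (·.fst) {d | d ∈ p.darts} :=
  List.inj_on_of_nodup_map (by rw [map_fst_darts]; exact hp.nodup_dropLast_support)

variable [DecidableEq V]

lemma IsHamiltonianCycle.exists_mem_darts_snd_eq (hp : p.IsHamiltonianCycle) (w : V) :
    ∃ d ∈ p.darts, d.snd = w := by
  have hw : w ∈ p.darts.map (·.snd) := by
    rw [map_snd_darts, ← List.count_pos_iff,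
      (isHamiltonianCycle_iff_isCycle_and_support_count_tail_eq_one.mp hp).2 w]
    exact Nat.one_pos
  simpa using hw

lemma exists_mem_darts_fst_notMem_snd_mem (hp : ∀ w, w ∈ p.support) {R : Set V} {x y : V}
    (hx : x ∉ R) (hy : y ∈ R) : ∃ d ∈ p.darts, d.fst ∉ R ∧ d.snd ∈ R := by
  by_cases hv : v ∈ R
  · obtain ⟨d, hd, hfst, hsnd⟩ :=
      (p.dropUntil x (hp x)).exists_boundary_dart Rᶜ hx (by simpa using hv)
    exact ⟨d, p.darts_dropUntil_subset_darts _ hd, hfst, by simpa using hsnd⟩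
  · obtain ⟨d, hd, hfst, hsnd⟩ :=
      (p.takeUntil y (hp y)).exists_boundary_dart Rᶜ hv (by simpa using hy)
    exact ⟨d, p.darts_takeUntil_subset_darts _ hd, hfst, by simpa using hsnd⟩

/-- Taking predecessors along the cycle embeds `A` into `S`, missing `d₀.fst`. -/
theorem IsHamiltonianCycle.card_lt_card_of_forall_adj (hp : p.IsHamiltonianCycle)
    {A S : Finset V} (hAS : ∀ a ∈ A, ∀ s, G.Adj s a → s ∈ S) {d₀ : G.Dart}
    (hd₀ : d₀ ∈ p.darts) (hS : d₀.fst ∈ S) (hA : d₀.snd ∉ A) : #A < #S := by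
  set D := p.darts.toFinset
  have hsub : D.filter (·.snd ∈ A) ⊆ D.filter (·.fst ∈ S) := fun d hd => by
    simp only [mem_filter] at hd ⊢
    exact ⟨hd.1, hAS _ hd.2 _ d.adj⟩
  calc #A ≤ #(D.filter (·.snd ∈ A)) := card_le_card_of_surjOn (·.snd) fun a ha => by
        obtain ⟨d, hd, rfl⟩ := hp.exists_mem_darts_snd_eq a
        exact ⟨d, by simpa [D, hd] using ha, rfl⟩
    _ < #(D.filter (·.fst ∈ S)) := Finset.card_lt_card <| (ssubset_iff_of_subset hsub).2
        ⟨d₀, by simpa [D, hd₀] using hS, by simp [hA]⟩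
    _ ≤ #S := card_le_card_of_injOn (·.fst) (fun d hd => (mem_filter.1 hd).2)
        fun d hd e he => hp.isCycle.injOn_fst_darts (by simpa [D] using (mem_filter.1 hd).1)
          (by simpa [D] using (mem_filter.1 he).1)

end Walk

theorem IsHamiltonian.card_lt_card_of_forall_adj [Fintype V] [DecidableEq V]
    (hG : G.IsHamiltonian) {A S : Finset V} (hAS : ∀ a ∈ A, ∀ s, G.Adj s a → s ∈ S) {R : Set V}
    (hRS : ∀ r ∈ R, ∀ s ∉ R, G.Adj s r → s ∈ S) (hAR : ∀ r ∈ R, r ∉ A) {x y : V}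
    (hx : x ∉ R) (hy : y ∈ R) : #A < #S := by
  have : Nontrivial V := ⟨x, y, fun h => hx (h ▸ hy)⟩
  obtain ⟨p, hp⟩ := hG.exists_isHamiltonianCycle x
  obtain ⟨d, hd, hfst, hsnd⟩ := p.exists_mem_darts_fst_notMem_snd_mem hp.mem_support hx hy
  exact hp.card_lt_card_of_forall_adj hAS hd (hRS _ hsnd _ hfst d.adj) (hAR _ hsnd)

end SimpleGraph

section JoinBot

variable {α β : Type*} {H : SimpleGraph β}

lemma M2_joinGraph_bot_adj_inl_inl {s : Sym2 (α ⊕ β)} {a b : α}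
    (h : (M2 (joinGraph ⊥ H)).Adj s s(.inl a, .inl b)) : ∃ c d, s = s(.inl c, .inr d) := by
  obtain ⟨x, y, z, hyz, rfl, ht⟩ := h
  obtain ⟨c, rfl⟩ : ∃ c, x = .inl c := by
    rcases Sym2.eq_iff.1 ht with ⟨h, -⟩ | ⟨-, h⟩ <;> exact ⟨_, h.symm⟩
  obtain ⟨c', rfl⟩ : ∃ c', z = .inl c' := by
    rcases Sym2.eq_iff.1 ht with ⟨-, h⟩ | ⟨h, -⟩ <;> exact ⟨_, h.symm⟩
  rcases y with d | d
  · simp [joinGraph] at hyz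
  · exact ⟨c, d, rfl⟩

lemma M2_joinGraph_bot_adj_inr_inr {s : Sym2 (α ⊕ β)} {a b : β}
    (h : (M2 (joinGraph ⊥ H)).Adj s s(.inr a, .inr b)) :
    (∃ c d, s = s(.inl c, .inr d)) ∨ ∃ c d, s = s(.inr c, .inr d) := by
  obtain ⟨x, y, z, -, rfl, ht⟩ := h
  obtain ⟨c, rfl⟩ : ∃ c, x = .inr c := by
    rcases Sym2.eq_iff.1 ht with ⟨h, -⟩ | ⟨-, h⟩ <;> exact ⟨_, h.symm⟩
  rcases y with d | d
  · exact .inl ⟨d, c, Sym2.eq_swap⟩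
  · exact .inr ⟨c, d, rfl⟩

variable (α β)

def leftPairs [Fintype α] : Finset (Sym2 (α ⊕ β)) :=
  univ.map (Function.Embedding.inl.sym2Map)

def mixedPairs [Fintype α] [Fintype β] : Finset (Sym2 (α ⊕ β)) :=
  univ.map ⟨fun q : α × β => s(.inl q.1, .inr q.2), by
    rintro ⟨a, b⟩ ⟨c, d⟩ h
    simpa [Sym2.eq_iff] using h⟩

variable {α β}

lemma mem_leftPairs [Fintype α] {s : Sym2 (α ⊕ β)} :
    s ∈ leftPairs α β ↔ ∃ a b, s = s(.inl a, .inl b) := by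
  simp only [leftPairs, mem_map, mem_univ, true_and]
  constructor
  · rintro ⟨u, rfl⟩
    induction u using Sym2.ind with
    | _ a b => exact ⟨a, b, rfl⟩
  · rintro ⟨a, b, rfl⟩
    exact ⟨s(a, b), rfl⟩

lemma mem_mixedPairs [Fintype α] [Fintype β] {s : Sym2 (α ⊕ β)} :
    s ∈ mixedPairs α β ↔ ∃ a b, s = s(.inl a, .inr b) := by
  simp only [mixedPairs, mem_map, mem_univ, true_and]
  exact ⟨fun ⟨⟨a, b⟩, h⟩ => ⟨a, b, h.symm⟩, fun ⟨a, b, h⟩ => ⟨⟨a, b⟩, h.symm⟩⟩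

lemma card_leftPairs [Fintype α] : #(leftPairs α β) = (Fintype.card α + 1).choose 2 := by
  simp [leftPairs, Sym2.card]

lemma card_mixedPairs [Fintype α] [Fintype β] :
    #(mixedPairs α β) = Fintype.card α * Fintype.card β := by
  simp [mixedPairs]

theorem choose_two_lt_of_isHamiltonian_M2_joinGraph_bot [Fintype α] [Fintype β] [DecidableEq α]
    [DecidableEq β] [Nonempty α] [Nonempty β]
    (hG : (M2 (joinGraph (⊥ : SimpleGraph α) H)).IsHamiltonian) :
    (Fintype.card α + 1).choose 2 < Fintype.card α * Fintype.card β := by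
  obtain ⟨a⟩ := ‹Nonempty α›
  obtain ⟨b⟩ := ‹Nonempty β›
  rw [← card_leftPairs (β := β), ← card_mixedPairs]
  refine hG.card_lt_card_of_forall_adj (R := {s | ∃ c d, s = s(.inr c, .inr d)})
    (x := s(.inl a, .inl a)) (y := s(.inr b, .inr b)) ?_ ?_ ?_ ?_ ⟨b, b, rfl⟩
  · intro t ht s hst
    obtain ⟨c, d, rfl⟩ := mem_leftPairs.1 ht
    exact mem_mixedPairs.2 (M2_joinGraph_bot_adj_inl_inl hst)
  · rintro _ ⟨c, d, rfl⟩ s hs hst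
    exact mem_mixedPairs.2 ((M2_joinGraph_bot_adj_inr_inr hst).resolve_right hs)
  · rintro _ ⟨c, d, rfl⟩
    simp [mem_leftPairs]
  · simp

end JoinBot

theorem stmt_5_general (m n : ℕ) (hn : 2 ≤ n) (h : m > 2 * (n - 1)) :
    ¬ (M2 (fanGraph m n)).IsHamiltonian := by
  intro hG
  have : Nonempty (Fin m) := ⟨⟨0, by omega⟩⟩
  have : Nonempty (Fin n) := ⟨⟨0, by omega⟩⟩
  have hlt := choose_two_lt_of_isHamiltonian_M2_joinGraph_bot (α := Fin m) (β := Fin n) hG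
  rw [Fintype.card_fin, Fintype.card_fin, Nat.choose_two_right, Nat.add_sub_cancel,
    Nat.div_lt_iff_lt_mul two_pos] at hlt
  nlinarith [Nat.mul_le_mul_right m (show 2 * n ≤ m + 1 by omega)]

theorem stmt_5 (m n : ℕ) (hm : 1 ≤ m) (hn : 2 ≤ n) (h : m > 2 * (n - 1)) :
    ¬ (M2 (fanGraph m n)).IsHamiltonian :=
  stmt_5_general m n hn h
end

section
/- With S = {{w_i, v_j} : i ∈ [m], j ∈ [n]} in M_2(F_{m,n}), the number of connected components of M_2(F_{m,n}) − S is at least binom(m+1, 2) + 1, which exceeds |S| = mn whenever m > 2(n−1). -/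
/-!
Every pair `{w_i, w_j}` (with `i = j` allowed) is an isolated vertex of `M₂(F_{m,n}) − S`:
moving one token of the pair along an edge of the fan means moving a `w` onto some `v`,
which lands in `S`. These `binom(m+1, 2)` isolated vertices, together with the component
of `{v_1, v_1}`, are pairwise distinct components.
-/

open SimpleGraph Function

lemma Sym2.ncard_setOf_eq_inl_inr (α β : Type*) :
    {s : Sym2 (α ⊕ β) | ∃ a b, s = s(Sum.inl a, Sum.inr b)}.ncard = Nat.card α * Nat.card β := by
  have hinj : Injective fun p : α × β => s(Sum.inl p.1, Sum.inr p.2) := by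
    rintro ⟨a, b⟩ ⟨a', b'⟩ h
    simpa [Sym2.eq_iff] using h
  have hrange : {s : Sym2 (α ⊕ β) | ∃ a b, s = s(Sum.inl a, Sum.inr b)} =
      Set.range fun p : α × β => s(Sum.inl p.1, Sum.inr p.2) := by
    ext s
    simp [eq_comm]
  rw [hrange, Set.ncard_range_of_injective hinj, Nat.card_prod]

namespace SimpleGraph

variable {V : Type*} {G : SimpleGraph V}

lemma eq_of_reachable_of_forall_not_adj {a b : V} (hiso : ∀ c, ¬ G.Adj a c)
    (hr : G.Reachable a b) : a = b := by
  obtain ⟨w⟩ := hr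
  cases w with
  | nil => rfl
  | cons hadj _ => exact absurd hadj (hiso _)

lemma card_add_one_le_card_connectedComponent [Finite V] {ι : Type*} {f : ι → V}
    (hf : Injective f) (hiso : ∀ i c, ¬ G.Adj (f i) c) {b : V} (hb : ∀ i, f i ≠ b) :
    Nat.card ι + 1 ≤ Nat.card G.ConnectedComponent := by
  have : Finite ι := Finite.of_injective f hf
  let g : ι ⊕ Unit → G.ConnectedComponent :=
    Sum.elim (fun i => G.connectedComponentMk (f i)) fun _ => G.connectedComponentMk b
  have hg : Injective g := by
    have reach_eq {i : ι} {v : V} (h : G.connectedComponentMk (f i) = G.connectedComponentMk v) :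
        f i = v :=
      eq_of_reachable_of_forall_not_adj (hiso i) (ConnectedComponent.exact h)
    rintro (i | _) (j | _) h
    · exact congrArg Sum.inl (hf (reach_eq h))
    · exact absurd (reach_eq h) (hb i)
    · exact absurd (reach_eq h.symm) (hb j)
    · rfl
  simpa using Nat.card_le_card_of_injective g hg

end SimpleGraph

lemma M2_joinGraph_bot_adj_map_inl {α β : Type*} {H : SimpleGraph β} {p : Sym2 α}
    {t : Sym2 (α ⊕ β)} (h : (M2 (joinGraph ⊥ H)).Adj (p.map Sum.inl) t) :
    ∃ a b, t = s(Sum.inl a, Sum.inr b) := by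
  obtain ⟨x, y, z, hyz, hp, rfl⟩ := h
  induction p using Sym2.inductionOn with
  | hf a a' =>
    rw [Sym2.map_mk, Sym2.eq_iff] at hp
    obtain ⟨i, j, rfl, rfl⟩ : ∃ i j, x = Sum.inl i ∧ y = Sum.inl j := by
      rcases hp with ⟨rfl, rfl⟩ | ⟨rfl, rfl⟩ <;> exact ⟨_, _, rfl, rfl⟩
    cases z with
    | inl k => simp [joinGraph] at hyz
    | inr k => exact ⟨i, k, rfl⟩

lemma Sym2.map_inl_ne_inl_inr {α β : Type*} (p : Sym2 α) (a : α) (b : β) :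
    p.map Sum.inl ≠ s(Sum.inl a, Sum.inr b) := by
  induction p using Sym2.inductionOn with
  | hf x y => simp

lemma mul_lt_choose_two_add_one {m n : ℕ} (h : 2 * (n - 1) < m) :
    m * n < (m + 1).choose 2 + 1 := by
  have hmul : m * n * 2 ≤ (m + 1) * m := by nlinarith [show 2 * n ≤ m + 1 by omega]
  rw [Nat.choose_two_right, Nat.add_sub_cancel]
  have := (Nat.le_div_iff_mul_le two_pos).mpr hmul
  omega

theorem stmt_7_general (m n : ℕ) (hn : 2 ≤ n)
    (S : Set (Sym2 (Fin m ⊕ Fin n)))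
    (hS : S = {s | ∃ (i : Fin m) (j : Fin n), s = s(Sum.inl i, Sum.inr j)}) :
    S.ncard = m * n ∧
    (m + 1).choose 2 + 1 ≤
      Nat.card (((M2 (fanGraph m n)).induce Sᶜ).ConnectedComponent) ∧
    (m > 2 * (n - 1) → (m + 1).choose 2 + 1 > m * n) := by
  refine ⟨by simpa [hS] using Sym2.ncard_setOf_eq_inl_inr (Fin m) (Fin n), ?_,
    mul_lt_choose_two_add_one⟩
  have hmem_S {s} : s ∈ S ↔ ∃ (i : Fin m) (j : Fin n), s = s(Sum.inl i, Sum.inr j) := by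
    rw [hS, Set.mem_ofPred_eq]
  let w : Sym2 (Fin m) → ↥Sᶜ := fun p =>
    ⟨p.map Sum.inl, fun hp =>
      let ⟨i, j, h⟩ := hmem_S.mp hp
      Sym2.map_inl_ne_inl_inr p i j h⟩
  let v : Fin n := ⟨0, by omega⟩
  have hv : s(Sum.inr v, Sum.inr v) ∈ Sᶜ := by simp [hS]
  have hw_inj : Injective w := fun p q h =>
    Sym2.map.injective Sum.inl_injective (congrArg Subtype.val h)
  have hw_iso : ∀ p c, ¬ ((M2 (fanGraph m n)).induce Sᶜ).Adj (w p) c := fun p c hadj =>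
    c.2 (hmem_S.mpr (M2_joinGraph_bot_adj_map_inl (induce_adj.mp hadj)))
  have hw_ne : ∀ p, w p ≠ ⟨_, hv⟩ := fun p h => by
    induction p using Sym2.inductionOn with
    | hf x y => simp [w] at h
  simpa [Nat.card_eq_fintype_card, Sym2.card] using
    card_add_one_le_card_connectedComponent hw_inj hw_iso hw_ne

theorem stmt_7 (m n : ℕ) (hm : 1 ≤ m) (hn : 2 ≤ n)
    (S : Set (Sym2 (Fin m ⊕ Fin n)))
    (hS : S = {s | ∃ (i : Fin m) (j : Fin n), s = s(Sum.inl i, Sum.inr j)}) :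
    S.ncard = m * n ∧
    (m + 1).choose 2 + 1 ≤
      Nat.card (((M2 (fanGraph m n)).induce Sᶜ).ConnectedComponent) ∧
    (m > 2 * (n - 1) → (m + 1).choose 2 + 1 > m * n) :=
  stmt_7_general m n hn S hS
end

section
/- For every n ≥ 2, the complete double vertex graph M_2(F_{1,n}) is Hamiltonian. -/
/-!
Write `c` for the hub of `F_{1,n}` and `0, …, L` for its path. By induction on `n`, `M₂(F_{1,n})`
has a Hamiltonian path from `{L, L}` to `{L-1, L}`; these two pairs are adjacent, so the path closes
up to a Hamiltonian cycle. Adding a path vertex `L' = L + 1`, the pairs containing `L'` are visited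
first, as `{L', L'}, {L', c}, {L', 0}, …, {L', L-1}`, then the old path is run backwards from
`{L-1, L}` to `{L, L}` through all pairs avoiding `L'`, and `{L, L'}` comes last.
-/

open SimpleGraph

theorem Sym2.mem_range_map_iff {α β : Type*} {f : α → β} {z : Sym2 β} :
    z ∈ Set.range (Sym2.map f) ↔ ∀ x ∈ z, x ∈ Set.range f := by
  induction z using Sym2.ind with
  | _ x y =>
    refine ⟨?_, fun h => ?_⟩
    · rintro ⟨z, hz⟩ w hw
      obtain ⟨v, -, rfl⟩ := Sym2.mem_map.1 (hz ▸ hw)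
      exact ⟨v, rfl⟩
    · obtain ⟨x', rfl⟩ := h x (Sym2.mem_mk_left x y)
      obtain ⟨y', rfl⟩ := h y (Sym2.mem_mk_right _ y)
      exact ⟨s(x', y'), rfl⟩

namespace SimpleGraph

variable {V : Type*} {G : SimpleGraph V} {u v : V}

lemma Walk.IsHamiltonian.isHamiltonianCycle_cons [DecidableEq V] {p : G.Walk v u}
    (hp : p.IsHamiltonian) (h : G.Adj u v) (hlen : 2 ≤ p.length) :
    (Walk.cons h p).IsHamiltonianCycle := by
  rw [Walk.isHamiltonianCycle_isCycle_and_isHamiltonian_tail,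
    Walk.isCycle_iff_isPath_tail_and_le_length]
  simp only [Walk.tail_cons, Walk.length_cons]
  refine ⟨⟨(Walk.isPath_copy _ _ _).2 hp.isPath, by omega⟩, fun w => ?_⟩
  simpa using hp w

lemma isHamiltonian_of_isHamiltonian_walk [Fintype V] [DecidableEq V] {p : G.Walk v u}
    (hp : p.IsHamiltonian) (h : G.Adj u v) (hcard : 3 ≤ Fintype.card V) : G.IsHamiltonian :=
  fun _ => ⟨u, .cons h p, hp.isHamiltonianCycle_cons h (by rw [hp.length_eq]; omega)⟩

theorem exists_isHamiltonian_walk_pathGraph (k : ℕ) :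
    ∃ p : (pathGraph (k + 1)).Walk 0 (Fin.last k), p.IsHamiltonian := by
  have hchain : (List.finRange (k + 1)).IsChain (pathGraph (k + 1)).Adj :=
    List.isChain_iff_getElem.2 fun i _ => by simp [pathGraph_adj]
  have hne : List.finRange (k + 1) ≠ [] := by simp
  refine ⟨(Walk.ofSupport _ hne hchain).copy (by simp [List.head_eq_getElem])
    (by simp [List.getLast_eq_getElem, Fin.last]), ?_⟩
  exact Walk.IsPath.isHamiltonian_of_mem (by simp [Walk.isPath_def, List.nodup_finRange])
    (by simp [List.mem_finRange])

end SimpleGraph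

namespace M2

variable {V W : Type*} {G : SimpleGraph V} {H : SimpleGraph W}

lemma adj_mk_left (x : V) {y z : V} (h : G.Adj y z) : (M2 G).Adj s(x, y) s(x, z) :=
  ⟨x, y, z, h, rfl, rfl⟩

lemma adj_mk_right (x : V) {y z : V} (h : G.Adj y z) : (M2 G).Adj s(y, x) s(z, x) := by
  rw [Sym2.eq_swap, Sym2.eq_swap (a := z)]
  exact adj_mk_left x h

def pairHom (x : V) : G →g M2 G where
  toFun y := s(x, y)
  map_rel' := adj_mk_left x

def map (f : G →g H) : M2 G →g M2 H where
  toFun := Sym2.map f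
  map_rel' := by
    rintro _ _ ⟨x, y, z, h, rfl, rfl⟩
    exact adj_mk_left (f x) (f.map_adj h)

@[simp]
lemma coe_map (f : G →g H) : ⇑(map f) = Sym2.map f := rfl

lemma map_injective {f : G →g H} (hf : Function.Injective f) : Function.Injective (map f) :=
  Sym2.map.injective hf

variable [DecidableEq V]

/-- The walk runs through the pairs `s(c, x)` along `r`, crosses to `s(b, a)`, follows `q`, and
ends at `s(a, c)`. -/
theorem exists_isHamiltonian_walk_extend {c a b : V} (hca : G.Adj c a)
    {r : G.Walk c b} (hr : r.IsPath) (hr_supp : ∀ x, x ∈ r.support ↔ x ≠ a)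
    {q : (M2 G).Walk s(b, a) s(a, a)} (hq : q.IsPath) (hq_supp : ∀ e, e ∈ q.support ↔ c ∉ e) :
    ∃ p : (M2 G).Walk s(c, c) s(a, c), p.IsHamiltonian := by
  have hbridge : (M2 G).Adj s(c, b) s(b, a) := by
    rw [Sym2.eq_swap]; exact adj_mk_left b hca
  have hclose : (M2 G).Adj s(a, a) s(a, c) := adj_mk_left a hca.symm
  let p : (M2 G).Walk s(c, c) s(a, c) := (r.map (pairHom c)).append (.cons hbridge (q.concat hclose))
  have hsupp : p.support = r.support.map (s(c, ·)) ++ (q.support ++ [s(a, c)]) := by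
    simp [p, Walk.support_append, Walk.support_concat, pairHom]
  have hc_last : s(a, c) ∉ r.support.map (s(c, ·)) := by
    intro hmem
    obtain ⟨x, hx, hxa⟩ := List.mem_map.1 hmem
    rw [Sym2.eq_swap (a := a), Sym2.congr_right] at hxa
    exact (hr_supp x).1 hx hxa
  refine ⟨p, Walk.IsPath.isHamiltonian_of_mem ?_ fun e => ?_⟩
  · rw [Walk.isPath_def, hsupp, List.nodup_append, List.nodup_append]
    refine ⟨hr.support_nodup.map fun _ _ => Sym2.congr_right.1,
      ⟨hq.support_nodup, List.nodup_singleton _, ?_⟩, ?_⟩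
    · intro e he e' he' hee'
      rw [List.mem_singleton.1 he'] at hee'
      exact (hq_supp e).1 he (hee' ▸ Sym2.mem_mk_right a c)
    · simp only [List.mem_map, List.mem_append, List.mem_singleton]
      rintro _ ⟨x, hx, rfl⟩ _ (he | rfl) h
      · exact (hq_supp _).1 (h ▸ he) (Sym2.mem_mk_left c x)
      · exact hc_last (List.mem_map.2 ⟨x, hx, h⟩)
  · rw [hsupp]
    by_cases hce : c ∈ e
    · obtain ⟨x, rfl⟩ := Sym2.mem_iff_exists.1 hce
      by_cases hxa : x = a
      · subst hxa; simp [Sym2.eq_swap]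
      · exact List.mem_append_left _ (List.mem_map_of_mem ((hr_supp x).2 hxa))
    · exact List.mem_append_right _ (List.mem_append_left _ ((hq_supp e).2 hce))

end M2

namespace fanGraph

open Sum

variable {m n : ℕ}

lemma adj_inl_inr (a : Fin m) (i : Fin n) : (fanGraph m n).Adj (inl a) (inr i) := trivial

lemma adj_inr_inr {i j : Fin n} : (fanGraph m n).Adj (inr i) (inr j) ↔ (pathGraph n).Adj i j :=
  Iff.rfl

def castSuccHom (m n : ℕ) : fanGraph m n →g fanGraph m (n + 1) where
  toFun := Sum.map id Fin.castSucc
  map_rel' {x y} h := by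
    rcases x with a | i <;> rcases y with b | j
    · exact h
    · exact adj_inl_inr _ _
    · exact (adj_inl_inr _ _).symm
    · simpa [adj_inr_inr, pathGraph_adj] using h

lemma castSuccHom_injective : Function.Injective (castSuccHom m n) :=
  Function.injective_id.sumMap (Fin.castSucc_injective n)

lemma mem_range_castSuccHom {x : Fin m ⊕ Fin (n + 1)} :
    x ∈ Set.range (castSuccHom m n) ↔ x ≠ inr (Fin.last n) := by
  rcases x with a | i
  · exact iff_of_true ⟨inl a, rfl⟩ (by simp)
  · induction i using Fin.lastCases with
    | last => simp [castSuccHom]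
    | cast j => exact iff_of_true ⟨inr j, rfl⟩ (by simp [Fin.castSucc_ne_last])

theorem exists_isPath_support_eq_compl (k : ℕ) :
    ∃ r : (fanGraph 1 (k + 3)).Walk (inr (Fin.last (k + 2))) (inr (Fin.last k).castSucc.castSucc),
      r.IsPath ∧ ∀ x, x ∈ r.support ↔ x ≠ inr (Fin.last (k + 1)).castSucc := by
  obtain ⟨w, hw⟩ := exists_isHamiltonian_walk_pathGraph k
  let f : pathGraph (k + 1) →g fanGraph 1 (k + 3) :=
    { toFun i := inr i.castSucc.castSucc
      map_rel' h := by simpa [adj_inr_inr, pathGraph_adj] using h }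
  have hf_apply (i : Fin (k + 1)) : f i = inr i.castSucc.castSucc := rfl
  have hf : Function.Injective f := fun i j h => by simpa [hf_apply] using h
  let r : (fanGraph 1 (k + 3)).Walk (inr (Fin.last (k + 2))) (inr (Fin.last k).castSucc.castSucc) :=
    .cons (adj_inl_inr 0 _).symm (.cons (adj_inl_inr 0 _) (w.map f))
  have hr : r.support = inr (Fin.last (k + 2)) :: inl 0 :: w.support.map f := by
    rw [← Walk.support_map]; rfl
  refine ⟨r, ?_, fun x => ?_⟩
  · rw [Walk.isPath_def, hr, List.nodup_cons, List.nodup_cons]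
    refine ⟨?_, ?_, hw.isPath.support_nodup.map hf⟩
    · simp [hf_apply, (Fin.castSucc_lt_last _).ne]
    · simp [hf_apply]
  · rw [hr]
    rcases x with a | j
    · simp [Subsingleton.elim a 0]
    induction j using Fin.lastCases with
    | last => simp [(Fin.castSucc_lt_last _).ne']
    | cast i =>
      induction i using Fin.lastCases with
      | last => simp [hf_apply]
      | cast l => simpa [hf_apply] using hw.mem_support l

end fanGraph

open Sum fanGraph

theorem M2_fanGraph_exists_isHamiltonian_walk_succ {m : ℕ}
    {p : (M2 (fanGraph 1 (m + 2))).Walk s(inr (Fin.last (m + 1)), inr (Fin.last (m + 1)))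
      s(inr (Fin.last m).castSucc, inr (Fin.last (m + 1)))} (hp : p.IsHamiltonian) :
    ∃ p : (M2 (fanGraph 1 (m + 3))).Walk s(inr (Fin.last (m + 2)), inr (Fin.last (m + 2)))
      s(inr (Fin.last (m + 1)).castSucc, inr (Fin.last (m + 2))), p.IsHamiltonian := by
  obtain ⟨r, hr, hr_supp⟩ := exists_isPath_support_eq_compl m
  let ι := castSuccHom 1 (m + 2)
  have hq : ((p.map (M2.map ι)).reverse).IsPath :=
    (hp.isPath.map (M2.map_injective castSuccHom_injective)).reverse
  have hq_supp (e) : e ∈ ((p.map (M2.map ι)).reverse).support ↔ inr (Fin.last (m + 2)) ∉ e := by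
    have hrange : e ∈ (p.map (M2.map ι)).support ↔ e ∈ Set.range (M2.map ι) := by
      rw [Walk.support_map, List.mem_map]
      exact ⟨fun ⟨e', _, he⟩ => ⟨e', he⟩, fun ⟨e', he⟩ => ⟨e', hp.mem_support e', he⟩⟩
    rw [Walk.support_reverse, List.mem_reverse, hrange, M2.coe_map, Sym2.mem_range_map_iff]
    simp only [ι, mem_range_castSuccHom]
    exact ⟨fun h hl => h _ hl rfl, fun h x hx hxl => h (hxl ▸ hx)⟩
  exact M2.exists_isHamiltonian_walk_extend (adj_inr_inr.2 (by simp [pathGraph_adj])) hr hr_supp hq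
    hq_supp

theorem M2_fanGraph_exists_isHamiltonian_walk (m : ℕ) :
    ∃ p : (M2 (fanGraph 1 (m + 2))).Walk s(inr (Fin.last (m + 1)), inr (Fin.last (m + 1)))
      s(inr (Fin.last m).castSucc, inr (Fin.last (m + 1))), p.IsHamiltonian := by
  induction m with
  | zero =>
    have h1 : (fanGraph 1 2).Adj (inr 1) (inl 0) := (adj_inl_inr _ _).symm
    have h0 : (fanGraph 1 2).Adj (inl 0) (inr 0) := adj_inl_inr _ _
    have h01 : (fanGraph 1 2).Adj (inr 0) (inr 1) := by simp [adj_inr_inr, pathGraph_adj]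
    refine ⟨.cons (M2.adj_mk_left _ h1) <| .cons (M2.adj_mk_right _ h1) <| .cons (M2.adj_mk_left _ h0) <|
        .cons (M2.adj_mk_right _ h0) <| .cons (M2.adj_mk_left _ h01) .nil, fun v => ?_⟩
    simp only [Walk.support_cons, Walk.support_nil]
    revert v
    decide
  | succ m ih =>
    obtain ⟨p, hp⟩ := ih
    exact M2_fanGraph_exists_isHamiltonian_walk_succ hp

theorem stmt_8 (n : ℕ) (hn : 2 ≤ n) :
    (M2 (fanGraph 1 n)).IsHamiltonian := by
  obtain ⟨m, rfl⟩ := Nat.exists_eq_add_of_le' hn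
  obtain ⟨p, hp⟩ := M2_fanGraph_exists_isHamiltonian_walk m
  refine isHamiltonian_of_isHamiltonian_walk hp (M2.adj_mk_right _ (adj_inr_inr.2 ?_)) ?_
  · simp [pathGraph_adj]
  · rw [Sym2.card, Fintype.card_sum, Fintype.card_fin, Fintype.card_fin]
    exact Nat.choose_le_choose 2 (show 3 ≤ 1 + (m + 2) + 1 by omega)
end
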